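/- Let m = 2n with n ≥ 2, let F = F_1·F_2·⋯·F_m with F_s ∈ {L_s^+, L_s^-, M_s^+, M_s^-} for each 1 ≤ s ≤ m, and let 1 ≤ a < b ≤ n. Then V_{2a-1,2b}·F·e_{2a-1}^⊥·e_{2b}^⊥ = (-1)^{|F_{2a-1}|+|F_{2b}|+‖F_{2a-1}‖+‖F_{2b}‖}·i·F^{2a,2b-1} and V_{2a,2b-1}·F·e_{2a}^⊥·e_{2b-1}^⊥ = (-1)^{|F_{2a}|+|F_{2b-1}|+‖F_{2a}‖+‖F_{2b-1}‖}·i·F^{2a,2b-1}. -/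

import Mathlib

noncomputable section

/-- The bilinear map `B((a,b),(c,d)) = ∑ⱼ aⱼ dⱼ` on `ℂ^m × ℂ^m`. -/
def splitBilin (m : ℕ) :
    ((Fin m → ℂ) × (Fin m → ℂ)) →ₗ[ℂ] ((Fin m → ℂ) × (Fin m → ℂ)) →ₗ[ℂ] ℂ :=
  LinearMap.mk₂ ℂ (fun v w => ∑ j, v.1 j * w.2 j)
    (fun v v' w => by simp [add_mul, Finset.sum_add_distrib])
    (fun c v w => by
      simp only [LinearMap.smul_apply, Prod.smul_fst, Pi.smul_apply, smul_eq_mul,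
        Finset.mul_sum]
      exact Finset.sum_congr rfl fun i _ => by ring)
    (fun v w w' => by simp [mul_add, Finset.sum_add_distrib])
    (fun c v w => by
      simp only [Prod.smul_snd, Pi.smul_apply, smul_eq_mul, Finset.mul_sum]
      exact Finset.sum_congr rfl fun i _ => by ring)

/-- The quadratic form `Q(a, b) = ∑ⱼ aⱼ bⱼ` on `ℂ^m × ℂ^m` (the span of the
`f_j^+` and the `f_j^-`). -/
def splitQ (m : ℕ) : QuadraticForm ℂ ((Fin m → ℂ) × (Fin m → ℂ)) :=
  LinearMap.BilinMap.toQuadraticMap (splitBilin m)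

/-- The forward basis element `e_j^+` (1-based index `j`). -/
def eP (m : ℕ) (j : ℕ) : CliffordAlgebra (splitQ m) :=
  CliffordAlgebra.ι (splitQ m) ((fun i => if (i : ℕ) + 1 = j then 1 else 0), 0)

/-- The backward basis element `e_j^-` (1-based index `j`). -/
def eM (m : ℕ) (j : ℕ) : CliffordAlgebra (splitQ m) :=
  CliffordAlgebra.ι (splitQ m) (0, (fun i => if (i : ℕ) + 1 = j then 1 else 0))

/-- `e_j = e_j^+ + e_j^-`. -/
def ee (m : ℕ) (j : ℕ) : CliffordAlgebra (splitQ m) := eP m j + eM m j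

/-- `e_j^⊥ = e_j^+ - e_j^-`. -/
def eperp (m : ℕ) (j : ℕ) : CliffordAlgebra (splitQ m) := eP m j - eM m j

/-- The constant `i` for odd (1-based) indices and `1` for even indices. -/
def oddI (s : ℕ) : ℂ := if s % 2 = 1 then Complex.I else 1

/-- `L_s^+`, i.e. `e_s^+ e_s^- + i e_s^+` for odd `s` and `e_s^+ e_s^- + e_s^+` for even `s`. -/
def idemLp (m : ℕ) (s : ℕ) : CliffordAlgebra (splitQ m) := eP m s * eM m s + oddI s • eP m s

/-- `L_s^-`. -/
def idemLm (m : ℕ) (s : ℕ) : CliffordAlgebra (splitQ m) := eP m s * eM m s - oddI s • eP m s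

/-- `M_s^+`, i.e. `e_s^- e_s^+ + i e_s^-` for odd `s` and `e_s^- e_s^+ + e_s^-` for even `s`. -/
def idemMp (m : ℕ) (s : ℕ) : CliffordAlgebra (splitQ m) := eM m s * eP m s + oddI s • eM m s

/-- `M_s^-`. -/
def idemMm (m : ℕ) (s : ℕ) : CliffordAlgebra (splitQ m) := eM m s * eP m s - oddI s • eM m s

/-- A generic choice `F_s ∈ {L_s^+, L_s^-, M_s^+, M_s^-}`, encoded by
`‖F_s‖ : Bool` (`true` for the `M`'s) and `|F_s| : Bool`
(`true` for `L_s^-` and `M_s^+`). -/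
def idemF (m : ℕ) (s : ℕ) : Bool → Bool → CliffordAlgebra (splitQ m)
  | false, false => idemLp m s
  | false, true => idemLm m s
  | true, false => idemMm m s
  | true, true => idemMp m s

/-- Numerical value of `|F_s|` or `‖F_s‖`. -/
def bval (b : Bool) : ℕ := if b then 1 else 0

/-- The four-vector `V_{a,b} = -e_a^⊥ e_a e_b^⊥ e_b`. -/
def VV (m : ℕ) (a b : ℕ) : CliffordAlgebra (splitQ m) :=
  -(eperp m a * ee m a * eperp m b * ee m b)

/-- The ordered product `F = F_1 F_2 ⋯ F_m`, the factor `F_s` being encoded by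
`(nrm s, sg s) = (‖F_s‖, |F_s|)`. -/
def prodF (m : ℕ) (nrm sg : ℕ → Bool) : CliffordAlgebra (splitQ m) :=
  ((List.range m).map fun s => idemF m (s + 1) (nrm (s + 1)) (sg (s + 1))).prod


/-!
Every factor `F_s` has the form `p q + c p` for the fermionic pair `(p, q) = (e_s^+, e_s^-)`
(or `(e_s^-, e_s^+)` for the `M`'s) and `c = ±i` or `±1`; the relations `p² = q² = 0`,
`p q + q p = 1` alone give `(p q - q p) F_s = F_s` and `F_s (p - q) = -c F'_s`, where `F'_s`
has coefficient `-1/c`. Since `e_s^⊥ e_s = e_s^+ e_s^- - e_s^- e_s^+`, the factor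
`e_s^⊥ e_s` of `V` multiplies `F` by `(-1)^‖F_s‖`, and `F_s e_s^⊥` is `±i F_s` for odd `s` and
`±F̃_s` for even `s`. Vectors with different indices anticommute, so `e_s^⊥ e_s` commutes with
the other factors while `e_t^⊥` travelling leftwards through `F_s` turns it into `F̃_s`.
Thus an odd `e_x^⊥` tildes the factors after `x`, an even one also `F_x` itself, and the two
flips cancel beyond the larger index, leaving `F^{2a,2b-1}`.
-/

theorem neg_one_pow_bval_not {R : Type*} [Ring R] (b : Bool) :
    (-1 : R) ^ bval (!b) = -(-1) ^ bval b := by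
  cases b <;> simp [bval]

structure IsFermionicPair {A : Type*} [Ring A] (p q : A) : Prop where
  mul_self_left : p * p = 0
  mul_self_right : q * q = 0
  mul_add_mul : p * q + q * p = 1

def fermionIdem {R A : Type*} [CommRing R] [Ring A] [Algebra R A] (p q : A) (c : R) : A :=
  p * q + c • p

theorem fermionIdem_mul_of_anticomm {R A : Type*} [CommRing R] [Ring A] [Algebra R A]
    {p q u : A} (hp : p * u = -(u * p)) (hq : q * u = -(u * q)) (c : R) :
    fermionIdem p q c * u = u * fermionIdem p q (-c) := by
  rw [fermionIdem, fermionIdem, add_mul, mul_assoc, hq, mul_neg, ← mul_assoc, hp, neg_mul,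
    neg_neg, smul_mul_assoc, hp, mul_add, mul_assoc, neg_smul, mul_neg, mul_smul_comm, smul_neg]

theorem commute_mul_of_anticomm {A : Type*} [Ring A] {u v x : A}
    (hu : x * u = -(u * x)) (hv : x * v = -(v * x)) : Commute (u * v) x := by
  have hv' : v * x = -(x * v) := by rw [hv, neg_neg]
  have hu' : u * x = -(x * u) := by rw [hu, neg_neg]
  rw [Commute, SemiconjBy, mul_assoc, hv', mul_neg, ← mul_assoc, hu', neg_mul, neg_neg, mul_assoc]

namespace IsFermionicPair

variable {R A : Type*} [CommRing R] [Ring A] [Algebra R A] {p q : A}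

theorem symm (h : IsFermionicPair p q) : IsFermionicPair q p :=
  ⟨h.mul_self_right, h.mul_self_left, by rw [add_comm, h.mul_add_mul]⟩

theorem mul_mul_self (h : IsFermionicPair p q) : p * q * p = p := by
  rw [mul_assoc, eq_sub_of_add_eq' h.mul_add_mul, mul_sub, mul_one, ← mul_assoc,
    h.mul_self_left, zero_mul, sub_zero]

theorem commutator_mul_fermionIdem (h : IsFermionicPair p q) (c : R) :
    (p * q - q * p) * fermionIdem p q c = fermionIdem p q c := by
  have hp : (p * q - q * p) * p = p := by
    rw [sub_mul, h.mul_mul_self, mul_assoc, h.mul_self_left, mul_zero, sub_zero]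
  rw [fermionIdem, mul_add, mul_smul_comm, hp, ← mul_assoc, hp]

theorem fermionIdem_mul_sub (h : IsFermionicPair p q) {c d : R} (hcd : c * d = -1) :
    fermionIdem p q c * (p - q) = (-c) • fermionIdem p q d := by
  rw [fermionIdem, fermionIdem, add_mul, mul_sub, mul_sub, h.mul_mul_self, mul_assoc p q q,
    h.mul_self_right, smul_mul_assoc, smul_mul_assoc, h.mul_self_left, mul_zero, smul_zero]
  linear_combination (norm := module) hcd • p

end IsFermionicPair

section Clifford

open CliffordAlgebra

variable {m : ℕ}

def unitVec (m j : ℕ) : Fin m → ℂ := fun i => if (i : ℕ) + 1 = j then 1 else 0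

theorem eP_eq_ι (j : ℕ) : eP m j = ι (splitQ m) (unitVec m j, 0) := rfl

theorem eM_eq_ι (j : ℕ) : eM m j = ι (splitQ m) (0, unitVec m j) := rfl

theorem splitQ_apply (x : (Fin m → ℂ) × (Fin m → ℂ)) : splitQ m x = ∑ j, x.1 j * x.2 j := rfl

theorem sum_unitVec_mul_unitVec_of_ne {s t : ℕ} (h : s ≠ t) :
    ∑ i, unitVec m s i * unitVec m t i = 0 :=
  Finset.sum_eq_zero fun i _ => by unfold unitVec; split_ifs <;> simp_all

theorem sum_unitVec_mul_self {j : ℕ} (h1 : 1 ≤ j) (h2 : j ≤ m) :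
    ∑ i, unitVec m j i * unitVec m j i = 1 := by
  rw [Fintype.sum_eq_single ⟨j - 1, by omega⟩ fun i hi => by
    unfold unitVec; rw [if_neg fun h => hi (Fin.ext (by simp; omega)), zero_mul]]
  simp [unitVec, Nat.sub_add_cancel h1]

theorem eP_mul_eP (s t : ℕ) : eP m s * eP m t = -(eP m t * eP m s) :=
  ι_mul_ι_comm_of_isOrtho (by simp [QuadraticMap.isOrtho_def, splitQ_apply])

theorem eM_mul_eM (s t : ℕ) : eM m s * eM m t = -(eM m t * eM m s) :=
  ι_mul_ι_comm_of_isOrtho (by simp [QuadraticMap.isOrtho_def, splitQ_apply])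

theorem eP_mul_eM_of_ne {s t : ℕ} (h : s ≠ t) : eP m s * eM m t = -(eM m t * eP m s) := by
  rw [eP_eq_ι, eM_eq_ι]
  exact ι_mul_ι_comm_of_isOrtho (by
    simp [QuadraticMap.isOrtho_def, splitQ_apply, sum_unitVec_mul_unitVec_of_ne h])

theorem eP_mul_self (j : ℕ) : eP m j * eP m j = 0 := by
  simp [eP_eq_ι, ι_sq_scalar, splitQ_apply]

theorem eM_mul_self (j : ℕ) : eM m j * eM m j = 0 := by
  simp [eM_eq_ι, ι_sq_scalar, splitQ_apply]

theorem isFermionicPair_eP_eM {j : ℕ} (h1 : 1 ≤ j) (h2 : j ≤ m) :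
    IsFermionicPair (eP m j) (eM m j) where
  mul_self_left := eP_mul_self j
  mul_self_right := eM_mul_self j
  mul_add_mul := by
    simp [eP_eq_ι, eM_eq_ι, ι_mul_ι_add_swap, QuadraticMap.polar, splitQ_apply,
      sum_unitVec_mul_self h1 h2]

theorem eP_mul_eperp_of_ne {s t : ℕ} (h : s ≠ t) : eP m s * eperp m t = -(eperp m t * eP m s) := by
  rw [eperp]
  linear_combination (norm := noncomm_ring) eP_mul_eP s t - eP_mul_eM_of_ne h

theorem eM_mul_eperp_of_ne {s t : ℕ} (h : s ≠ t) : eM m s * eperp m t = -(eperp m t * eM m s) := by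
  rw [eperp]
  linear_combination (norm := noncomm_ring) eP_mul_eM_of_ne h.symm - eM_mul_eM s t

theorem eP_mul_ee_of_ne {s t : ℕ} (h : s ≠ t) : eP m s * ee m t = -(ee m t * eP m s) := by
  rw [ee]
  linear_combination (norm := noncomm_ring) eP_mul_eP s t + eP_mul_eM_of_ne h

theorem eM_mul_ee_of_ne {s t : ℕ} (h : s ≠ t) : eM m s * ee m t = -(ee m t * eM m s) := by
  rw [ee]
  linear_combination (norm := noncomm_ring) eP_mul_eM_of_ne h.symm + eM_mul_eM s t

theorem eperp_mul_ee (j : ℕ) : eperp m j * ee m j = eP m j * eM m j - eM m j * eP m j := by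
  rw [eperp, ee]
  linear_combination (norm := noncomm_ring) eP_mul_self j - eM_mul_self j

end Clifford

section SingleFactor

open Complex

variable {m : ℕ}

theorem idemF_false (s : ℕ) (gs : Bool) :
    idemF m s false gs = fermionIdem (eP m s) (eM m s) ((-1) ^ bval gs * oddI s) := by
  cases gs <;> simp [idemF, idemLp, idemLm, fermionIdem, bval, sub_eq_add_neg]

theorem idemF_true (s : ℕ) (gs : Bool) :
    idemF m s true gs = fermionIdem (eM m s) (eP m s) ((-1) ^ bval (!gs) * oddI s) := by
  cases gs <;> simp [idemF, idemMp, idemMm, fermionIdem, bval, sub_eq_add_neg]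

theorem eperp_mul_ee_mul_idemF {s : ℕ} (h1 : 1 ≤ s) (h2 : s ≤ m) (ns gs : Bool) :
    eperp m s * ee m s * idemF m s ns gs = (-1 : ℂ) ^ bval ns • idemF m s ns gs := by
  have hpair := isFermionicPair_eP_eM h1 h2
  rw [eperp_mul_ee]
  cases ns
  · rw [idemF_false, hpair.commutator_mul_fermionIdem]
    simp [bval]
  · rw [idemF_true, ← neg_sub, neg_mul, hpair.symm.commutator_mul_fermionIdem]
    simp [bval]

theorem idemF_mul_eperp_of_odd {s : ℕ} (h1 : 1 ≤ s) (h2 : s ≤ m) (hs : s % 2 = 1)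
    (ns gs : Bool) :
    idemF m s ns gs * eperp m s = ((-1) ^ bval (!gs) * I) • idemF m s ns gs := by
  have hpair := isFermionicPair_eP_eM h1 h2
  have hI : oddI s = I := if_pos hs
  have hsq (k : ℕ) : ((-1 : ℂ) ^ k * I) * ((-1) ^ k * I) = -1 := by
    rw [mul_mul_mul_comm, ← mul_pow, neg_one_mul, neg_neg, one_pow, one_mul, I_mul_I]
  rw [eperp]
  cases ns
  · rw [idemF_false, hI, hpair.fermionIdem_mul_sub (hsq _), neg_one_pow_bval_not, neg_mul]
  · rw [idemF_true, hI, ← neg_sub, mul_neg, hpair.symm.fermionIdem_mul_sub (hsq _), neg_smul,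
      neg_neg]

theorem idemF_mul_eperp_of_even {s : ℕ} (h1 : 1 ≤ s) (h2 : s ≤ m) (hs : s % 2 = 0)
    (ns gs : Bool) :
    idemF m s ns gs * eperp m s = (-1 : ℂ) ^ bval (!gs) • idemF m s ns (!gs) := by
  have hpair := isFermionicPair_eP_eM h1 h2
  have hone : oddI s = 1 := if_neg (by omega)
  have hsq (b : Bool) : (-1 : ℂ) ^ bval b * (-1) ^ bval (!b) = -1 := by
    cases b <;> simp [bval]
  rw [eperp]
  cases ns
  · rw [idemF_false, idemF_false, hone, mul_one, mul_one, hpair.fermionIdem_mul_sub (hsq _),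
      ← neg_one_pow_bval_not]
  · rw [idemF_true, idemF_true, hone, mul_one, mul_one, ← neg_sub, mul_neg,
      hpair.symm.fermionIdem_mul_sub (hsq (!gs)), neg_smul, neg_neg, Bool.not_not]

theorem idemF_mul_eperp_of_ne {s t : ℕ} (h : s ≠ t) (ns gs : Bool) :
    idemF m s ns gs * eperp m t = eperp m t * idemF m s ns (!gs) := by
  have hP := eP_mul_eperp_of_ne (m := m) h
  have hM := eM_mul_eperp_of_ne (m := m) h
  cases ns
  · rw [idemF_false, idemF_false, fermionIdem_mul_of_anticomm hP hM, neg_one_pow_bval_not,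
      neg_mul]
  · rw [idemF_true, idemF_true, fermionIdem_mul_of_anticomm hM hP, neg_one_pow_bval_not (!gs),
      neg_mul]

theorem commute_eperp_mul_ee_idemF {s t : ℕ} (h : s ≠ t) (ns gs : Bool) :
    Commute (eperp m t * ee m t) (idemF m s ns gs) := by
  have hP := commute_mul_of_anticomm (eP_mul_eperp_of_ne (m := m) h) (eP_mul_ee_of_ne h)
  have hM := commute_mul_of_anticomm (eM_mul_eperp_of_ne (m := m) h) (eM_mul_ee_of_ne h)
  cases ns
  · rw [idemF_false]
    exact (hP.mul_right hM).add_right (hP.smul_right _)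
  · rw [idemF_true]
    exact (hM.mul_right hP).add_right (hM.smul_right _)

end SingleFactor

section Products

open Complex

variable {m : ℕ} {nrm : ℕ → Bool}

def idemProd (m : ℕ) (nrm sg : ℕ → Bool) (l : List ℕ) : CliffordAlgebra (splitQ m) :=
  (l.map fun s => idemF m s (nrm s) (sg s)).prod

theorem idemProd_congr {sg sg' : ℕ → Bool} {l : List ℕ} (h : ∀ s ∈ l, sg s = sg' s) :
    idemProd m nrm sg l = idemProd m nrm sg' l := by
  unfold idemProd
  rw [List.map_congr_left fun s hs => by rw [h s hs]]

theorem idemProd_mul_eperp (sg : ℕ → Bool) {x : ℕ} {l : List ℕ} (hx : x ∉ l) :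
    idemProd m nrm sg l * eperp m x = eperp m x * idemProd m nrm (fun s => !sg s) l := by
  induction l with
  | nil => simp [idemProd]
  | cons s l ih =>
    rw [List.mem_cons, not_or] at hx
    simp only [idemProd, List.map_cons, List.prod_cons] at ih ⊢
    rw [mul_assoc, ih hx.2, ← mul_assoc, idemF_mul_eperp_of_ne (Ne.symm hx.1), mul_assoc]

theorem commute_eperp_mul_ee_idemProd (sg : ℕ → Bool) {x : ℕ} {l : List ℕ} (hx : x ∉ l) :
    Commute (eperp m x * ee m x) (idemProd m nrm sg l) :=
  Commute.list_prod_right _ _ fun _ hf => by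
    obtain ⟨s, hs, rfl⟩ := List.mem_map.mp hf
    exact commute_eperp_mul_ee_idemF (ne_of_mem_of_not_mem hs hx) _ _

theorem range'_one_eq_append_cons {x : ℕ} (h1 : 1 ≤ x) (h2 : x ≤ m) :
    List.range' 1 m = List.range' 1 (x - 1) ++ x :: List.range' (x + 1) (m - x) := by
  refine List.range'_eq_append_iff.mpr ⟨x - 1, by omega, rfl, ?_⟩
  rw [show m - (x - 1) = m - x + 1 by omega, List.range'_succ]
  congr 2 <;> omega

theorem prodF_eq_mul_idemF_mul (sg : ℕ → Bool) {x : ℕ} (h1 : 1 ≤ x) (h2 : x ≤ m) :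
    prodF m nrm sg = idemProd m nrm sg (List.range' 1 (x - 1)) * idemF m x (nrm x) (sg x) *
      idemProd m nrm sg (List.range' (x + 1) (m - x)) := by
  have hprod : prodF m nrm sg = idemProd m nrm sg (List.range' 1 m) := by
    simp only [prodF, idemProd, List.range'_eq_map_range, List.map_map, Function.comp_def,
      add_comm 1]
  simp [hprod, range'_one_eq_append_cons h1 h2, idemProd, mul_assoc]

theorem eperp_mul_ee_mul_prodF (sg : ℕ → Bool) {x : ℕ} (h1 : 1 ≤ x) (h2 : x ≤ m) :
    eperp m x * ee m x * prodF m nrm sg = (-1 : ℂ) ^ bval (nrm x) • prodF m nrm sg := by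
  have hx : x ∉ List.range' 1 (x - 1) := by simp [List.mem_range'_1]; omega
  rw [prodF_eq_mul_idemF_mul sg h1 h2, ← mul_assoc, ← mul_assoc,
    (commute_eperp_mul_ee_idemProd sg hx).eq, mul_assoc _ (eperp m x * ee m x),
    eperp_mul_ee_mul_idemF h1 h2, mul_smul_comm, smul_mul_assoc]

theorem prodF_mul_eperp {sg sg' : ℕ → Bool} {x : ℕ} {c : ℂ} (h1 : 1 ≤ x) (h2 : x ≤ m)
    (hlt : ∀ s < x, sg' s = sg s) (hgt : ∀ s, x < s → sg' s = !sg s)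
    (hx : idemF m x (nrm x) (sg x) * eperp m x = c • idemF m x (nrm x) (sg' x)) :
    prodF m nrm sg * eperp m x = c • prodF m nrm sg' := by
  have hx' : x ∉ List.range' (x + 1) (m - x) := by simp [List.mem_range'_1]
  rw [prodF_eq_mul_idemF_mul sg h1 h2, prodF_eq_mul_idemF_mul sg' h1 h2, mul_assoc,
    idemProd_mul_eperp sg hx', ← mul_assoc, mul_assoc _ (idemF _ _ _ _), hx,
    idemProd_congr (sg' := sg') fun s hs => (hlt s (by simp [List.mem_range'_1] at hs; omega)).symm,
    idemProd_congr (sg' := sg') fun s hs => (hgt s (by simp [List.mem_range'_1] at hs; omega)).symm,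
    mul_smul_comm, smul_mul_assoc]

theorem prodF_mul_eperp_of_odd (sg : ℕ → Bool) {x : ℕ} (h1 : 1 ≤ x) (h2 : x ≤ m)
    (hx : x % 2 = 1) :
    prodF m nrm sg * eperp m x =
      ((-1) ^ bval (!sg x) * I) • prodF m nrm (fun s => if x < s then !sg s else sg s) :=
  prodF_mul_eperp h1 h2 (fun _ hs => if_neg hs.not_gt) (fun _ hs => if_pos hs)
    (by rw [if_neg (lt_irrefl x)]; exact idemF_mul_eperp_of_odd h1 h2 hx _ _)

theorem prodF_mul_eperp_of_even (sg : ℕ → Bool) {x : ℕ} (h1 : 1 ≤ x) (h2 : x ≤ m)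
    (hx : x % 2 = 0) :
    prodF m nrm sg * eperp m x =
      (-1 : ℂ) ^ bval (!sg x) • prodF m nrm (fun s => if x ≤ s then !sg s else sg s) :=
  prodF_mul_eperp h1 h2 (fun _ hs => if_neg hs.not_ge) (fun _ hs => if_pos hs.le)
    (by rw [if_pos le_rfl]; exact idemF_mul_eperp_of_even h1 h2 hx _ _)

theorem VV_mul_prodF (sg : ℕ → Bool) {x y : ℕ} (hx1 : 1 ≤ x) (hxm : x ≤ m) (hy1 : 1 ≤ y)
    (hym : y ≤ m) :
    VV m x y * prodF m nrm sg =
      (-((-1 : ℂ) ^ bval (nrm x) * (-1) ^ bval (nrm y))) • prodF m nrm sg := by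
  rw [VV, mul_assoc (eperp m x * ee m x), neg_mul, mul_assoc (eperp m x * ee m x),
    eperp_mul_ee_mul_prodF sg hy1 hym, mul_smul_comm, eperp_mul_ee_mul_prodF sg hx1 hxm,
    smul_smul, ← neg_smul, mul_comm]

end Products

section TwoFlips

open Complex

variable {m : ℕ} (nrm sg : ℕ → Bool)

theorem VV_mul_prodF_mul_eperp_mul_eperp_of_odd_of_even {x y : ℕ} (hx1 : 1 ≤ x) (hxy : x < y)
    (hym : y ≤ m) (hx : x % 2 = 1) (hy : y % 2 = 0) :
    VV m x y * prodF m nrm sg * eperp m x * eperp m y =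
      ((-1 : ℂ) ^ (bval (sg x) + bval (sg y) + bval (nrm x) + bval (nrm y)) * I) •
        prodF m nrm (fun s => if x < s ∧ s < y then !sg s else sg s) := by
  rw [VV_mul_prodF sg hx1 (by omega) (by omega) hym, smul_mul_assoc,
    prodF_mul_eperp_of_odd sg hx1 (by omega) hx, smul_mul_assoc, smul_mul_assoc,
    prodF_mul_eperp_of_even _ (by omega) hym hy, smul_smul, smul_smul]
  congr 1
  · simp only [if_pos hxy, Bool.not_not, neg_one_pow_bval_not, pow_add]
    ring
  · congr 1
    funext s
    split_ifs <;> simp_all <;> omega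

theorem VV_mul_prodF_mul_eperp_mul_eperp_of_even_of_odd {x y : ℕ} (hx1 : 1 ≤ x) (hxy : x < y)
    (hym : y ≤ m) (hx : x % 2 = 0) (hy : y % 2 = 1) :
    VV m x y * prodF m nrm sg * eperp m x * eperp m y =
      ((-1 : ℂ) ^ (bval (sg x) + bval (sg y) + bval (nrm x) + bval (nrm y)) * I) •
        prodF m nrm (fun s => if x ≤ s ∧ s ≤ y then !sg s else sg s) := by
  rw [VV_mul_prodF sg hx1 (by omega) (by omega) hym, smul_mul_assoc,
    prodF_mul_eperp_of_even sg hx1 (by omega) hx, smul_mul_assoc, smul_mul_assoc,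
    prodF_mul_eperp_of_odd _ (by omega) hym hy, smul_smul, smul_smul]
  congr 1
  · simp only [if_pos hxy.le, Bool.not_not, neg_one_pow_bval_not, pow_add]
    ring
  · congr 1
    funext s
    split_ifs <;> simp_all <;> omega

end TwoFlips

theorem V_prodF_eperp_oddeven_evenodd_general (n : ℕ) (nrm sg : ℕ → Bool)
    (a b : ℕ) (ha : 1 ≤ a) (hab : a < b) (hb : b ≤ n) :
    VV (2 * n) (2 * a - 1) (2 * b) * prodF (2 * n) nrm sg *
          eperp (2 * n) (2 * a - 1) * eperp (2 * n) (2 * b) =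
        ((-1 : ℂ) ^ (bval (sg (2 * a - 1)) + bval (sg (2 * b)) +
            bval (nrm (2 * a - 1)) + bval (nrm (2 * b))) * Complex.I) •
          prodF (2 * n) nrm
            (fun s => if 2 * a ≤ s ∧ s ≤ 2 * b - 1 then !sg s else sg s) ∧
      VV (2 * n) (2 * a) (2 * b - 1) * prodF (2 * n) nrm sg *
          eperp (2 * n) (2 * a) * eperp (2 * n) (2 * b - 1) =
        ((-1 : ℂ) ^ (bval (sg (2 * a)) + bval (sg (2 * b - 1)) +
            bval (nrm (2 * a)) + bval (nrm (2 * b - 1))) * Complex.I) •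
          prodF (2 * n) nrm
            (fun s => if 2 * a ≤ s ∧ s ≤ 2 * b - 1 then !sg s else sg s) := by
  have hflip (s : ℕ) : (2 * a - 1 < s ∧ s < 2 * b) ↔ (2 * a ≤ s ∧ s ≤ 2 * b - 1) := by omega
  constructor
  · simpa only [hflip] using VV_mul_prodF_mul_eperp_mul_eperp_of_odd_of_even nrm sg
      (x := 2 * a - 1) (y := 2 * b) (by omega) (by omega) (by omega) (by omega) (by omega)
  · exact VV_mul_prodF_mul_eperp_mul_eperp_of_even_of_odd nrm sg
      (by omega) (by omega) (by omega) (by omega) (by omega)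

/-- with `m = 2n`, `n ≥ 2`, `1 ≤ a < b ≤ n`, the odd-even and even-odd
cases of the action `V_{·,·} F e_·^⊥ e_·^⊥`, producing `i · F^{2a,2b-1}`. -/
theorem V_prodF_eperp_oddeven_evenodd (n : ℕ) (hn : 2 ≤ n) (nrm sg : ℕ → Bool)
    (a b : ℕ) (ha : 1 ≤ a) (hab : a < b) (hb : b ≤ n) :
    VV (2 * n) (2 * a - 1) (2 * b) * prodF (2 * n) nrm sg *
          eperp (2 * n) (2 * a - 1) * eperp (2 * n) (2 * b) =
        ((-1 : ℂ) ^ (bval (sg (2 * a - 1)) + bval (sg (2 * b)) +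
            bval (nrm (2 * a - 1)) + bval (nrm (2 * b))) * Complex.I) •
          prodF (2 * n) nrm
            (fun s => if 2 * a ≤ s ∧ s ≤ 2 * b - 1 then !sg s else sg s) ∧
      VV (2 * n) (2 * a) (2 * b - 1) * prodF (2 * n) nrm sg *
          eperp (2 * n) (2 * a) * eperp (2 * n) (2 * b - 1) =
        ((-1 : ℂ) ^ (bval (sg (2 * a)) + bval (sg (2 * b - 1)) +
            bval (nrm (2 * a)) + bval (nrm (2 * b - 1))) * Complex.I) •
          prodF (2 * n) nrm
            (fun s => if 2 * a ≤ s ∧ s ≤ 2 * b - 1 then !sg s else sg s) :=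
  V_prodF_eperp_oddeven_evenodd_general n nrm sg a b ha hab hb
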